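/- Uniqueness up to sign of the osculating Möbius transformation: let x ∈ ℂ, and let (a, b, c, d) and (a', b', c', d') be quadruples of complex numbers with a·d − b·c = 1, a'·d' − b'·c' = 1, c·x + d ≠ 0 and c'·x + d' ≠ 0. Set g(z) = (a·z + b)/(c·z + d) and g̃(z) = (a'·z + b')/(c'·z + d'). If g(x) = g̃(x), deriv g x = deriv g̃ x, and deriv (deriv g) x = deriv (deriv g̃) x, then (a', b', c', d') = (a, b, c, d) or (a', b', c', d') = (−a, −b, −c, −d). -/

import Mathlib

/-!
With unit determinant, the derivative of `z ↦ (a z + b)/(c z + d)` at `x` is `1/(c x + d)^2`,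
so equal first derivatives force `c' x + d' = ε (c x + d)` with `ε = ±1`. The second
derivative `-2c/(c x + d)^3` then gives `c' = ε c`,
hence `d' = ε d`; the values give `a' x + b' = ε (a x + b)`, and the determinant condition
separates this into `a' = ε a` and `b' = ε b`.
-/

open Filter Topology

theorem hasDerivAt_moebius (a b c d z : ℂ) (hz : c * z + d ≠ 0) :
    HasDerivAt (fun z : ℂ => (a * z + b) / (c * z + d))
      ((a * d - b * c) / (c * z + d) ^ 2) z := by
  refine ((((hasDerivAt_id' z).const_mul a).add_const b).fun_div
    (((hasDerivAt_id' z).const_mul c).add_const d) hz).congr_deriv ?_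
  ring

theorem deriv_moebius (a b c d z : ℂ) (hz : c * z + d ≠ 0) :
    deriv (fun z : ℂ => (a * z + b) / (c * z + d)) z = (a * d - b * c) / (c * z + d) ^ 2 :=
  (hasDerivAt_moebius a b c d z hz).deriv

theorem deriv_deriv_moebius (a b c d x : ℂ) (hx : c * x + d ≠ 0) :
    deriv (deriv (fun z : ℂ => (a * z + b) / (c * z + d))) x
      = -2 * c * (a * d - b * c) / (c * x + d) ^ 3 := by
  have hderiv : deriv (fun z : ℂ => (a * z + b) / (c * z + d))
      =ᶠ[𝓝 x] fun z => (a * d - b * c) / (c * z + d) ^ 2 := by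
    have hnear : ∀ᶠ z in 𝓝 x, c * z + d ≠ 0 :=
      (show Continuous fun z : ℂ => c * z + d by fun_prop).continuousAt.eventually_ne hx
    filter_upwards [hnear] with z hz using deriv_moebius a b c d z hz
  have hsq : HasDerivAt (fun z : ℂ => (c * z + d) ^ 2) (2 * (c * x + d) * c) x := by
    refine ((((hasDerivAt_id' x).const_mul c).add_const d).fun_pow 2).congr_deriv ?_
    ring
  rw [hderiv.deriv_eq, ((hasDerivAt_const x (a * d - b * c)).fun_div hsq (pow_ne_zero 2 hx)).deriv]
  field_simp
  ring

theorem moebius_coeffs_eq_mul_of_jet_eq {x a b c d a' b' c' d' ε : ℂ} (hε : ε ^ 2 = 1)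
    (hdet : a * d - b * c = 1) (hdet' : a' * d' - b' * c' = 1) (hden : c * x + d ≠ 0)
    (hsign : c' * x + d' = ε * (c * x + d))
    (h0 : (a * x + b) / (c * x + d) = (a' * x + b') / (c' * x + d'))
    (h2 : -2 * c / (c * x + d) ^ 3 = -2 * c' / (c' * x + d') ^ 3) :
    a' = ε * a ∧ b' = ε * b ∧ c' = ε * c ∧ d' = ε * d := by
  have hε0 : ε ≠ 0 := by rintro rfl; norm_num at hε
  rw [hsign] at h0 h2
  have hc : c' = ε * c := by
    field_simp at h2
    linear_combination h2 + (ε * c) * hε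
  have hd : d' = ε * d := by linear_combination hsign - x * hc
  subst hc hd
  have hab : a' * x + b' = ε * (a * x + b) := by
    rw [div_eq_div_iff hden (mul_ne_zero hε0 hden)] at h0
    apply mul_right_cancel₀ hden
    linear_combination -h0
  have ha : a' = ε * a := by
    -- with `b'` eliminated by `hab`, `hdet'` reads `a' (c x + d) = ε (1 + c (a x + b)) = ε a (c x + d)`
    apply mul_right_cancel₀ hden
    linear_combination ε * hdet' - (a' * d - b' * c) * hε + c * hab - ε * hdet
  exact ⟨ha, by linear_combination hab - x * ha, rfl, rfl⟩

theorem moebius_coeffs_eq_or_eq_neg_of_jet_eq {x a b c d a' b' c' d' : ℂ}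
    (hdet : a * d - b * c = 1) (hdet' : a' * d' - b' * c' = 1) (hden : c * x + d ≠ 0)
    (h0 : (a * x + b) / (c * x + d) = (a' * x + b') / (c' * x + d'))
    (h1 : (c * x + d) ^ 2 = (c' * x + d') ^ 2)
    (h2 : -2 * c / (c * x + d) ^ 3 = -2 * c' / (c' * x + d') ^ 3) :
    (a', b', c', d') = (a, b, c, d) ∨ (a', b', c', d') = (-a, -b, -c, -d) := by
  rcases sq_eq_sq_iff_eq_or_eq_neg.mp h1.symm with hsign | hsign
  · obtain ⟨rfl, rfl, rfl, rfl⟩ := moebius_coeffs_eq_mul_of_jet_eq (one_pow 2) hdet hdet' hden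
      (by rw [hsign, one_mul]) h0 h2
    simp
  · obtain ⟨rfl, rfl, rfl, rfl⟩ := moebius_coeffs_eq_mul_of_jet_eq neg_one_sq hdet hdet' hden
      (by rw [hsign, neg_one_mul]) h0 h2
    simp

/-- Uniqueness up to sign of the osculating Möbius transformation: two unit
determinant Möbius transformations with the same 2-jet at a point `x` have
coefficient quadruples that agree up to an overall sign. -/
theorem osculating_moebius_unique (x a b c d a' b' c' d' : ℂ)
    (hdet : a * d - b * c = 1) (hdet' : a' * d' - b' * c' = 1)
    (hden : c * x + d ≠ 0) (hden' : c' * x + d' ≠ 0)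
    (h0 : (fun z : ℂ => (a * z + b) / (c * z + d)) x =
          (fun z : ℂ => (a' * z + b') / (c' * z + d')) x)
    (h1 : deriv (fun z : ℂ => (a * z + b) / (c * z + d)) x =
          deriv (fun z : ℂ => (a' * z + b') / (c' * z + d')) x)
    (h2 : deriv (deriv (fun z : ℂ => (a * z + b) / (c * z + d))) x =
          deriv (deriv (fun z : ℂ => (a' * z + b') / (c' * z + d'))) x) :
    (a', b', c', d') = (a, b, c, d) ∨ (a', b', c', d') = (-a, -b, -c, -d) := by
  rw [deriv_moebius _ _ _ _ _ hden, deriv_moebius _ _ _ _ _ hden', hdet, hdet', one_div, one_div,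
    inv_inj] at h1
  rw [deriv_deriv_moebius _ _ _ _ _ hden, deriv_deriv_moebius _ _ _ _ _ hden', hdet, hdet',
    mul_one, mul_one] at h2
  exact moebius_coeffs_eq_or_eq_neg_of_jet_eq hdet hdet' hden h0 h1 h2
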